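/- For the normalized pendulum system ẋ₁ = x₂, ẋ₂ = -sin(x₁) - x₂, the function v(x₁,x₂) = 40.6843·x₁x₂ + 35.6870·x₁² + 84.3906·x₂² satisfies v(x) > 0 and ∇v(x)·f(x) < 0 for all x with 0.1 ≤ ‖x‖ ≤ 1.0, where ∇v·f = (2·35.6870·x₁ + 40.6843·x₂)·x₂ + (40.6843·x₁ + 2·84.3906·x₂)·(-sin(x₁) - x₂). -/

import Mathlib

/-!
`v` is a positive definite quadratic form, since its discriminant is negative. For the Lie
derivative, replace `sin x₁` by its Taylor polynomial `x₁ - x₁³/6`: on `|x₁| ≤ 1` the error is at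
most `x₁⁴/100`, and its coefficient `40.6843 x₁ + 168.7812 x₂` has modulus at most `174` on the
unit disc by Cauchy–Schwarz. What remains is a polynomial inequality on the annulus.
-/

lemma abs_le_one_of_sq_add_sq_le_one {x y : ℝ} (h : x ^ 2 + y ^ 2 ≤ 1) : |x| ≤ 1 :=
  (sq_le_one_iff_abs_le_one x).1 (by nlinarith [sq_nonneg y])

lemma Real.abs_sin_sub_taylor_le {x : ℝ} (hx : |x| ≤ 1) :
    |Real.sin x - (x - x ^ 3 / 6)| ≤ x ^ 4 / 100 := by
  calc |Real.sin x - (x - x ^ 3 / 6)| ≤ |x| ^ 5 / 100 := Real.sin_bound hx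
    _ = |x| * x ^ 4 / 100 := by rw [pow_succ', Even.pow_abs ⟨2, rfl⟩]
    _ ≤ x ^ 4 / 100 := by gcongr; exact mul_le_of_le_one_left (by positivity) hx

lemma quadratic_form_pos {a b c x y : ℝ} (hb : 0 < b) (hdisc : a ^ 2 < 4 * b * c)
    (hxy : 0 < x ^ 2 + y ^ 2) : 0 < a * (x * y) + b * x ^ 2 + c * y ^ 2 := by
  have key : 4 * b * (a * (x * y) + b * x ^ 2 + c * y ^ 2) =
      (2 * b * x + a * y) ^ 2 + (4 * b * c - a ^ 2) * y ^ 2 := by ring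
  rcases eq_or_ne y 0 with rfl | hy
  · nlinarith
  · have : 0 < (4 * b * c - a ^ 2) * y ^ 2 := mul_pos (by linarith) (by positivity)
    nlinarith [sq_nonneg (2 * b * x + a * y)]

lemma abs_mul_add_mul_le {a b x y K : ℝ} (hK : 0 ≤ K) (hab : a ^ 2 + b ^ 2 ≤ K ^ 2)
    (hxy : x ^ 2 + y ^ 2 ≤ 1) : |a * x + b * y| ≤ K :=
  abs_le_of_sq_le_sq (by nlinarith [sq_nonneg (a * y - b * x), sq_nonneg a, sq_nonneg b]) hK

/-- `s` stands for `sin x₁`. -/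
def pendulumLieDeriv (s x₁ x₂ : ℝ) : ℝ :=
  (2 * 35.6870 * x₁ + 40.6843 * x₂) * x₂ + (40.6843 * x₁ + 2 * 84.3906 * x₂) * (-s - x₂)

lemma pendulumLieDeriv_taylor_add_lt {x₁ x₂ : ℝ} (h₁ : (0.01 : ℝ) ≤ x₁ ^ 2 + x₂ ^ 2)
    (h₂ : x₁ ^ 2 + x₂ ^ 2 ≤ 1) :
    pendulumLieDeriv (x₁ - x₁ ^ 3 / 6) x₁ x₂ + 174 * (x₁ ^ 4 / 100) < 0 := by
  unfold pendulumLieDeriv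
  -- The quadratic part is negative definite; the factor `1 - ‖x‖²` absorbs the quartic terms.
  nlinarith [mul_nonneg (sub_nonneg.2 h₂) (sq_nonneg (x₁ + 1.25 * x₂)), sq_nonneg (x₁ + 2 * x₂)]

lemma pendulumLieDeriv_neg {s x₁ x₂ : ℝ} (hs : |s - (x₁ - x₁ ^ 3 / 6)| ≤ x₁ ^ 4 / 100)
    (h₁ : (0.01 : ℝ) ≤ x₁ ^ 2 + x₂ ^ 2) (h₂ : x₁ ^ 2 + x₂ ^ 2 ≤ 1) :
    pendulumLieDeriv s x₁ x₂ < 0 := by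
  set c := 40.6843 * x₁ + 2 * 84.3906 * x₂
  have hc : |c| ≤ 174 := abs_mul_add_mul_le (by norm_num) (by norm_num) h₂
  have hsplit : pendulumLieDeriv s x₁ x₂ =
      pendulumLieDeriv (x₁ - x₁ ^ 3 / 6) x₁ x₂ - c * (s - (x₁ - x₁ ^ 3 / 6)) := by
    unfold pendulumLieDeriv; ring
  have herr : -(c * (s - (x₁ - x₁ ^ 3 / 6))) ≤ 174 * (x₁ ^ 4 / 100) :=
    (neg_le_abs _).trans (abs_mul c _ ▸ mul_le_mul hc hs (abs_nonneg _) (by norm_num))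
  linarith [pendulumLieDeriv_taylor_add_lt h₁ h₂]

/-- The synthesized function `v(x) = 40.6843·x₁x₂ + 35.6870·x₁² + 84.3906·x₂²` is a
Lyapunov function for the normalized pendulum `ẋ₁ = x₂, ẋ₂ = -sin x₁ - x₂` on the
annulus `0.1 ≤ ‖x‖ ≤ 1`. -/
theorem pendulum_lyapunov (x₁ x₂ : ℝ)
    (h₁ : (0.01 : ℝ) ≤ x₁ ^ 2 + x₂ ^ 2) (h₂ : x₁ ^ 2 + x₂ ^ 2 ≤ 1) :
    (40.6843 * (x₁ * x₂) + 35.6870 * x₁ ^ 2 + 84.3906 * x₂ ^ 2 > 0) ∧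
    ((2 * 35.6870 * x₁ + 40.6843 * x₂) * x₂ +
      (40.6843 * x₁ + 2 * 84.3906 * x₂) * (-Real.sin x₁ - x₂) < 0) :=
  ⟨quadratic_form_pos (by norm_num) (by norm_num) (by linarith),
    pendulumLieDeriv_neg
      (Real.abs_sin_sub_taylor_le (abs_le_one_of_sq_add_sq_le_one h₂)) h₁ h₂⟩
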